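/- arXiv:2003.06069 — 3 statements merged into one kernel-verified Lean document; each statement's English description precedes it below -/
import Mathlib

section
/- Let h : ℝ → ℝ satisfy c'(a − b) ≤ h(a) − h(b) for all a ≥ b, with c' > 0. Define argmax-e(x) ∈ ℝⁿ to be the uniform distribution over the indices achieving the maximum of x (i.e., argmax-e(x)_i = 1/m if x_i = max_j x_j where m is the number of maximizers, and 0 otherwise). Then for any x ∈ ℝⁿ, ‖softmax_h(x) − argmax-e(x)‖₂ ≤ 2n·exp(−c'·δ), where δ = max_i x_i − max{x_j : x_j < max_i x_i} (and δ = +∞, so the bound is 0, when all coordinates of x are equal). -/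
/-!
Softmax takes the same value on all maximizers of `x`, so its `ℓ¹`-distance to the uniform
distribution on the maximizers is exactly twice the softmax mass of the non-maximal coordinates.
Each of those has weight at most `exp (h (x j) - h (max x)) ≤ exp (-c' δ)`, and `ℓ² ≤ ℓ¹`.
-/

open Real Finset

noncomputable def softmaxH {n : ℕ} (h : ℝ → ℝ) (x : EuclideanSpace ℝ (Fin n)) :
    EuclideanSpace ℝ (Fin n) :=
  WithLp.toLp 2 (fun i => Real.exp (h (x i)) / ∑ j, Real.exp (h (x j)))

/-- The maximum entry of `x`. -/
noncomputable def maxVal {n : ℕ} [NeZero n] (x : EuclideanSpace ℝ (Fin n)) : ℝ :=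
  Finset.univ.sup' Finset.univ_nonempty x

/-- The set of indices whose entry is strictly below the maximum. -/
noncomputable def subMax {n : ℕ} [NeZero n] (x : EuclideanSpace ℝ (Fin n)) : Finset (Fin n) :=
  Finset.univ.filter (fun j => x j < maxVal x)

/-- `argmax-e(x)`: the uniform distribution over the maximizing indices of `x`. -/
noncomputable def argmaxE {n : ℕ} [NeZero n] (x : EuclideanSpace ℝ (Fin n)) :
    EuclideanSpace ℝ (Fin n) :=
  WithLp.toLp 2 (fun i =>
    if x i = maxVal x then
      (1 : ℝ) / (Finset.univ.filter (fun j => x j = maxVal x)).card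
    else 0)

lemma EuclideanSpace.norm_le_sum_abs {ι : Type*} [Fintype ι] (y : EuclideanSpace ℝ ι) :
    ‖y‖ ≤ ∑ i, |y i| := by
  rw [EuclideanSpace.norm_eq, Real.sqrt_le_left (sum_nonneg fun i _ => abs_nonneg (y i))]
  simpa only [Real.norm_eq_abs] using
    sum_sq_le_sq_sum_of_nonneg (s := univ) (f := fun i => |y i|) fun i _ => abs_nonneg (y i)

lemma sum_abs_sub_uniform_eq_two_mul_sum_not {ι : Type*} [Fintype ι] (q : ι → ℝ) (P : ι → Prop)
    [DecidablePred P] (hq0 : ∀ i, 0 ≤ q i) (hq1 : ∑ i, q i = 1) (a : ℝ)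
    (hqa : ∀ i, P i → q i = a) (hP : ∃ i, P i) :
    ∑ i, |q i - if P i then 1 / (#{i | P i} : ℝ) else 0| = 2 * ∑ i with ¬P i, q i := by
  obtain ⟨i₀, hi₀⟩ := hP
  have hm : (0 : ℝ) < #{i | P i} := by exact_mod_cast card_pos.mpr ⟨i₀, by simpa using hi₀⟩
  have hmass : #{i | P i} * a + ∑ i with ¬P i, q i = 1 := by
    rw [← hq1, ← sum_filter_add_sum_filter_not univ P, sum_congr rfl fun i hi =>
      hqa i (mem_filter.mp hi).2, sum_const, nsmul_eq_mul]
  have hout_nonneg : 0 ≤ ∑ i with ¬P i, q i := sum_nonneg fun i _ => hq0 i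
  have ha : a ≤ 1 / #{i | P i} := by rw [le_div_iff₀ hm]; linarith
  have hinside : ∑ i with P i, |q i - 1 / (#{i | P i} : ℝ)| = ∑ i with ¬P i, q i := by
    rw [sum_congr rfl fun i hi => by rw [hqa i (mem_filter.mp hi).2], sum_const, nsmul_eq_mul,
      abs_of_nonpos (sub_nonpos.mpr ha), neg_sub, mul_sub, mul_one_div_cancel hm.ne']
    linarith
  have houtside : ∑ i with ¬P i, |q i - if P i then 1 / (#{i | P i} : ℝ) else 0| =
      ∑ i with ¬P i, q i :=
    sum_congr rfl fun i hi => by rw [if_neg (mem_filter.mp hi).2, sub_zero, abs_of_nonneg (hq0 i)]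
  rw [← sum_filter_add_sum_filter_not univ P, houtside,
    sum_congr rfl fun i hi => by rw [if_pos (mem_filter.mp hi).2], hinside]
  ring

section

variable {n : ℕ} (h : ℝ → ℝ) (x : EuclideanSpace ℝ (Fin n))

lemma softmaxH_apply (i : Fin n) :
    softmaxH h x i = Real.exp (h (x i)) / ∑ j, Real.exp (h (x j)) :=
  rfl

lemma softmaxH_nonneg (i : Fin n) : 0 ≤ softmaxH h x i :=
  div_nonneg (Real.exp_nonneg _) (sum_nonneg fun _ _ => Real.exp_nonneg _)

lemma softmaxH_le_exp_sub (i k : Fin n) : softmaxH h x i ≤ Real.exp (h (x i) - h (x k)) := by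
  rw [softmaxH_apply, Real.exp_sub]
  exact div_le_div_of_nonneg_left (Real.exp_nonneg _) (Real.exp_pos _)
    (single_le_sum (fun j _ => (Real.exp_pos (h (x j))).le) (mem_univ k))

variable [NeZero n]

lemma sum_softmaxH : ∑ i, softmaxH h x i = 1 := by
  simp only [softmaxH_apply, ← sum_div]
  exact div_self (sum_pos (fun j _ => Real.exp_pos _) univ_nonempty).ne'

lemma le_maxVal (i : Fin n) : x i ≤ maxVal x :=
  le_sup' x (mem_univ i)

lemma exists_eq_maxVal : ∃ i, x i = maxVal x := by
  obtain ⟨i, -, hi⟩ := exists_mem_eq_sup' univ_nonempty x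
  exact ⟨i, hi.symm⟩

lemma filter_ne_maxVal_eq_subMax : ({i | ¬x i = maxVal x} : Finset (Fin n)) = subMax x :=
  filter_congr fun i _ => (le_maxVal x i).lt_iff_ne.symm

lemma norm_softmaxH_sub_argmaxE_le :
    ‖softmaxH h x - argmaxE x‖ ≤ 2 * ∑ j ∈ subMax x, softmaxH h x j := by
  obtain ⟨i₀, hi₀⟩ := exists_eq_maxVal x
  calc ‖softmaxH h x - argmaxE x‖ ≤ ∑ i, |softmaxH h x i - argmaxE x i| :=
        EuclideanSpace.norm_le_sum_abs _
    _ = 2 * ∑ j ∈ subMax x, softmaxH h x j := by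
        rw [← filter_ne_maxVal_eq_subMax]
        exact sum_abs_sub_uniform_eq_two_mul_sum_not _ _ (softmaxH_nonneg h x) (sum_softmaxH h x)
          (softmaxH h x i₀) (fun i hi => by rw [softmaxH_apply, softmaxH_apply, hi, hi₀]) ⟨i₀, hi₀⟩

lemma softmaxH_le_exp_neg_gap {c' : ℝ} (hc' : 0 ≤ c')
    (hh : ∀ a b : ℝ, b ≤ a → c' * (a - b) ≤ h a - h b) (hne : (subMax x).Nonempty)
    {j : Fin n} (hj : j ∈ subMax x) :
    softmaxH h x j ≤ Real.exp (-c' * (maxVal x - (subMax x).sup' hne x)) := by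
  obtain ⟨i₀, hi₀⟩ := exists_eq_maxVal x
  have hgap : c' * (maxVal x - (subMax x).sup' hne x) ≤ c' * (x i₀ - x j) := by
    rw [hi₀]
    exact mul_le_mul_of_nonneg_left (by linarith [le_sup' x hj]) hc'
  have hgrowth := hh (x i₀) (x j) (hi₀ ▸ le_maxVal x j)
  calc softmaxH h x j ≤ Real.exp (h (x j) - h (x i₀)) := softmaxH_le_exp_sub h x j i₀
    _ ≤ Real.exp (-c' * (maxVal x - (subMax x).sup' hne x)) := Real.exp_le_exp.mpr (by linarith)

end

/-- Approximation of `argmax-e` by `softmax_h`: if `c'(a-b) ≤ h(a) - h(b)` for `a ≥ b`,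
then `‖softmax_h(x) - argmax-e(x)‖₂ ≤ 2 n exp(-c' δ)` where `δ` is the action gap;
when all coordinates are equal (`δ = ∞`) the two maps coincide. -/
theorem stmt_3 {n : ℕ} [NeZero n] (h : ℝ → ℝ) (c' : ℝ) (hc' : 0 < c')
    (hh : ∀ a b : ℝ, b ≤ a → c' * (a - b) ≤ h a - h b)
    (x : EuclideanSpace ℝ (Fin n)) :
    (∀ hne : (subMax x).Nonempty,
        ‖softmaxH h x - argmaxE x‖ ≤
          2 * n * Real.exp (-c' * (maxVal x - (subMax x).sup' hne x))) ∧
    (subMax x = ∅ → softmaxH h x = argmaxE x) := by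
  have hdist := norm_softmaxH_sub_argmaxE_le h x
  refine ⟨fun hne => ?_, fun hempty => ?_⟩
  · have hcard : ((subMax x).card : ℝ) ≤ n := by
      exact_mod_cast (card_le_univ (subMax x)).trans_eq (Fintype.card_fin n)
    calc ‖softmaxH h x - argmaxE x‖ ≤ 2 * ∑ j ∈ subMax x, softmaxH h x j := hdist
      _ ≤ 2 * ((subMax x).card * Real.exp (-c' * (maxVal x - (subMax x).sup' hne x))) := by
          rw [← nsmul_eq_mul]
          gcongr
          exact sum_le_card_nsmul _ _ _ fun j hj => softmaxH_le_exp_neg_gap h x hc'.le hh hne hj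
      _ ≤ 2 * n * Real.exp (-c' * (maxVal x - (subMax x).sup' hne x)) := by
          rw [← mul_assoc]
          gcongr
  · rw [hempty, sum_empty, mul_zero] at hdist
    exact sub_eq_zero.mp (norm_le_zero_iff.mp hdist)
end

section
/- Let d ∈ [0,1) and let (ε_k) be a nonnegative summable sequence. Then for every K ≥ 1, Σ_{k=0}^{K−1} d^{K−k}·ε_k ≤ (sup_{k≥0} ε_k)/(1 − d) · d^{⌊(K−1)/2⌋} + Σ_{k=⌈(K−1)/2⌉}^{∞} ε_k. -/
/-!
Split the sum at `m = K / 2`. On the head `k < m` the weight `d ^ (K - k)` has exponent at least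
`K + 1 - m`, so bounding each `ε k` by `⨆ k, ε k` leaves a geometric series worth at most
`d ^ (K + 1 - m) / (1 - d)`. On the tail `m ≤ k < K` the weights are at most `1`, so that part is
dominated by the tail series `∑' k, ε (k + m)`.
-/

open Finset

section GeometricWeights

variable {d : ℝ}

theorem sum_range_pow_sub_le (hd0 : 0 ≤ d) (hd1 : d < 1) {m n : ℕ} (hmn : m ≤ n) :
    ∑ k ∈ range m, d ^ (n - k) ≤ d ^ (n + 1 - m) / (1 - d) := by
  have hreindex : ∑ k ∈ range m, d ^ (n - k) = ∑ i ∈ Ico (n + 1 - m) (n + 1), d ^ i := by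
    rw [← sum_range_reflect, sum_Ico_eq_sum_range]
    refine sum_congr (by congr 1; omega) fun k hk => ?_
    rw [mem_range] at hk
    congr 1
    omega
  rw [hreindex]
  exact geom_sum_Ico_le_of_lt_one hd0 hd1

theorem sum_range_pow_sub_mul_le (hd0 : 0 ≤ d) (hd1 : d < 1) {ε : ℕ → ℝ} {c : ℝ}
    (hε : ∀ k, 0 ≤ ε k) (hεc : ∀ k, ε k ≤ c) {m n : ℕ} (hmn : m ≤ n) :
    ∑ k ∈ range m, d ^ (n - k) * ε k ≤ c / (1 - d) * d ^ (n + 1 - m) := by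
  have hc : 0 ≤ c := (hε 0).trans (hεc 0)
  calc ∑ k ∈ range m, d ^ (n - k) * ε k ≤ ∑ k ∈ range m, d ^ (n - k) * c :=
        sum_le_sum fun k _ => mul_le_mul_of_nonneg_left (hεc k) (pow_nonneg hd0 _)
    _ = c * ∑ k ∈ range m, d ^ (n - k) := by rw [← sum_mul, mul_comm]
    _ ≤ c * (d ^ (n + 1 - m) / (1 - d)) :=
        mul_le_mul_of_nonneg_left (sum_range_pow_sub_le hd0 hd1 hmn) hc
    _ = c / (1 - d) * d ^ (n + 1 - m) := by ring

end GeometricWeights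

theorem sum_Ico_le_tsum_nat_add {ε : ℕ → ℝ} (hε : ∀ k, 0 ≤ ε k) (hsum : Summable ε) (m n : ℕ) :
    ∑ k ∈ Ico m n, ε k ≤ ∑' k, ε (k + m) := by
  rw [sum_Ico_eq_sum_range]
  simp_rw [add_comm m]
  exact ((summable_nat_add_iff m).mpr hsum).sum_le_tsum _ fun k _ => hε _

theorem sum_Ico_pow_sub_mul_le_tsum_nat_add {d : ℝ} (hd0 : 0 ≤ d) (hd1 : d ≤ 1) {ε : ℕ → ℝ}
    (hε : ∀ k, 0 ≤ ε k) (hsum : Summable ε) (m n : ℕ) :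
    ∑ k ∈ Ico m n, d ^ (n - k) * ε k ≤ ∑' k, ε (k + m) :=
  calc ∑ k ∈ Ico m n, d ^ (n - k) * ε k ≤ ∑ k ∈ Ico m n, ε k :=
        sum_le_sum fun k _ => mul_le_of_le_one_left (hε k) (pow_le_one₀ hd0 hd1)
    _ ≤ ∑' k, ε (k + m) := sum_Ico_le_tsum_nat_add hε hsum m n

theorem le_iSup_of_summable {ε : ℕ → ℝ} (hε : ∀ k, 0 ≤ ε k) (hsum : Summable ε) (k : ℕ) :
    ε k ≤ ⨆ k, ε k :=
  le_ciSup ⟨∑' k, ε k, by rintro _ ⟨i, rfl⟩; exact hsum.le_tsum i fun j _ => hε j⟩ k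

-- In natural division, `(K - 1) / 2` is `⌊(K - 1) / 2⌋` and `K / 2` is `⌈(K - 1) / 2⌉`.
theorem stmt_9_general (d : ℝ) (hd0 : 0 ≤ d) (hd1 : d < 1)
    (ε : ℕ → ℝ) (hε : ∀ k, 0 ≤ ε k) (hsum : Summable ε)
    (K : ℕ) :
    ∑ k ∈ Finset.range K, d ^ (K - k) * ε k ≤
      (⨆ k, ε k) / (1 - d) * d ^ ((K - 1) / 2) + ∑' k : ℕ, ε (k + K / 2) := by
  have hsplit : K / 2 ≤ K := Nat.div_le_self K 2
  rw [← sum_range_add_sum_Ico _ hsplit]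
  gcongr
  · calc ∑ k ∈ range (K / 2), d ^ (K - k) * ε k
        ≤ (⨆ k, ε k) / (1 - d) * d ^ (K + 1 - K / 2) :=
          sum_range_pow_sub_mul_le hd0 hd1 hε (le_iSup_of_summable hε hsum) hsplit
      _ ≤ (⨆ k, ε k) / (1 - d) * d ^ ((K - 1) / 2) := by
          have hsup : 0 ≤ ⨆ k, ε k := (hε 0).trans (le_iSup_of_summable hε hsum 0)
          have : 0 < 1 - d := by linarith
          exact mul_le_mul_of_nonneg_left (pow_le_pow_of_le_one hd0 hd1.le (by omega))
            (by positivity)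
  · exact sum_Ico_pow_sub_mul_le_tsum_nat_add hd0 hd1.le hε hsum _ _

/-- Geometric-weighted tail bound: for `d ∈ [0,1)` and a summable nonnegative sequence `ε`,
`Σ_{k=0}^{K-1} d^{K-k} ε_k ≤ (sup_k ε_k)/(1-d) · d^⌊(K-1)/2⌋ + Σ_{k ≥ ⌈(K-1)/2⌉} ε_k`.
(For natural `K ≥ 1`, `⌊(K-1)/2⌋ = (K-1)/2` and `⌈(K-1)/2⌉ = K/2` in natural division.) -/
theorem stmt_9 (d : ℝ) (hd0 : 0 ≤ d) (hd1 : d < 1)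
    (ε : ℕ → ℝ) (hε : ∀ k, 0 ≤ ε k) (hsum : Summable ε)
    (K : ℕ) (hK : 1 ≤ K) :
    ∑ k ∈ Finset.range K, d ^ (K - k) * ε k ≤
      (⨆ k, ε k) / (1 - d) * d ^ ((K - 1) / 2) + ∑' k : ℕ, ε (k + K / 2) :=
  stmt_9_general d hd0 hd1 ε hε hsum K
end

section
/- Let X be a finite subset of ℝᵏ and n = |X|. For any two vectors x, y ∈ ℝⁿ, viewing softmax_c(x) and softmax_c(y) as probability distributions over X, we have W₁(softmax_c(x), softmax_c(y)) ≤ (diam(X)·√n·c/2)·‖x − y‖₂ ≤ (diam(X)·n·c/2)·‖x − y‖_∞, where softmax_c(x)_i = exp(c·x_i)/Σ_j exp(c·x_j). -/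
open Finset

/-- ℓ₁-Wasserstein distance between two distributions supported on a finite set. -/
noncomputable def W1 {α : Type*} (T : Finset α) (dst : α → α → ℝ) (ν ν' : α → ℝ) : ℝ :=
  sInf { c : ℝ | ∃ M : α → α → ℝ,
    (∀ x y, 0 ≤ M x y) ∧
    (∀ x ∈ T, ∑ y ∈ T, M x y = ν x) ∧
    (∀ y ∈ T, ∑ x ∈ T, M x y = ν' y) ∧
    c = ∑ x ∈ T, ∑ y ∈ T, M x y * dst x y }

/-- Softmax with temperature `c` of a function `x` on the finite set `X`, viewed as a
probability distribution on `X`. -/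
noncomputable def smx {k : ℕ} (X : Finset (EuclideanSpace ℝ (Fin k))) (c : ℝ)
    (x : EuclideanSpace ℝ (Fin k) → ℝ) : EuclideanSpace ℝ (Fin k) → ℝ :=
  fun z => Real.exp (c * x z) / ∑ w ∈ X, Real.exp (c * x w)

/-!
Transport along the maximal coupling, which leaves the common mass `min ν ν'` in place and
spreads the excess of `ν` proportionally over the excess of `ν'`, costs at most `diam X` times
half the ℓ₁ distance of `ν` and `ν'`.

For the ℓ₁ distance of two softmax distributions, fix a sign vector `s` and differentiate
`⟨softmax (g + t (f - g)), s⟩` in `t`: the derivative is the covariance of `s` and `f - g` under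
the softmax weights, which Cauchy–Schwarz bounds by `‖f - g‖_∞`. Taking for `s` the signs of
`softmax f - softmax g` and `f = c x`, `g = c y` gives `‖softmax_c x - softmax_c y‖₁ ≤ c ‖x - y‖_∞`,
and the stated bounds follow from `‖·‖_∞ ≤ ‖·‖₂ ≤ √n ‖·‖_∞`.
-/

def weightedCov {α : Type*} (T : Finset α) (p s d : α → ℝ) : ℝ :=
  ∑ z ∈ T, p z * s z * d z - (∑ z ∈ T, p z * s z) * ∑ z ∈ T, p z * d z

section WeightedCov

variable {α : Type*} {T : Finset α}

theorem sq_weightedCov_le {p : α → ℝ} (hp : ∀ z ∈ T, 0 ≤ p z) (hp1 : ∑ z ∈ T, p z = 1)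
    (s d : α → ℝ) :
    weightedCov T p s d ^ 2 ≤ (∑ z ∈ T, p z * s z ^ 2) * ∑ z ∈ T, p z * d z ^ 2 := by
  set m := ∑ z ∈ T, p z * s z
  have hcov : weightedCov T p s d = ∑ z ∈ T, p z * (s z - m) * d z := by
    simp only [weightedCov, mul_sub, sub_mul, sum_sub_distrib, mul_sum]
    congr 1
    exact sum_congr rfl fun z _ => by ring
  have hvar : ∑ z ∈ T, p z * (s z - m) ^ 2 = ∑ z ∈ T, p z * s z ^ 2 - m ^ 2 := by
    have hexpand : ∀ z, p z * (s z - m) ^ 2 = p z * s z ^ 2 - 2 * m * (p z * s z) + m ^ 2 * p z :=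
      fun z => by ring
    simp only [hexpand, sum_add_distrib, sum_sub_distrib, ← mul_sum, hp1]
    ring
  calc weightedCov T p s d ^ 2
      ≤ (∑ z ∈ T, p z * (s z - m) ^ 2) * ∑ z ∈ T, p z * d z ^ 2 := by
        rw [hcov]
        refine sum_sq_le_sum_mul_sum_of_sq_le_mul T (fun z hz => ?_) (fun z hz => ?_)
          (fun z _ => le_of_eq (by ring))
        · exact mul_nonneg (hp z hz) (sq_nonneg _)
        · exact mul_nonneg (hp z hz) (sq_nonneg _)
    _ ≤ (∑ z ∈ T, p z * s z ^ 2) * ∑ z ∈ T, p z * d z ^ 2 := by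
        rw [hvar]
        gcongr
        · exact sum_nonneg fun z hz => mul_nonneg (hp z hz) (sq_nonneg _)
        · nlinarith [sq_nonneg m]

theorem abs_weightedCov_le {p s d : α → ℝ} {M : ℝ} (hp : ∀ z ∈ T, 0 ≤ p z)
    (hp1 : ∑ z ∈ T, p z = 1) (hs : ∀ z ∈ T, |s z| ≤ 1) (hd : ∀ z ∈ T, |d z| ≤ M) (hM : 0 ≤ M) :
    |weightedCov T p s d| ≤ M := by
  have hs2 : ∑ z ∈ T, p z * s z ^ 2 ≤ 1 := by
    calc ∑ z ∈ T, p z * s z ^ 2 ≤ ∑ z ∈ T, p z * 1 := by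
          gcongr with z hz
          · exact hp z hz
          · exact (sq_le_one_iff_abs_le_one _).2 (hs z hz)
      _ = 1 := by simp [hp1]
  have hd2 : ∑ z ∈ T, p z * d z ^ 2 ≤ M ^ 2 := by
    calc ∑ z ∈ T, p z * d z ^ 2 ≤ ∑ z ∈ T, p z * M ^ 2 := by
          refine sum_le_sum fun z hz => mul_le_mul_of_nonneg_left ?_ (hp z hz)
          exact sq_le_sq' (abs_le.1 (hd z hz)).1 (abs_le.1 (hd z hz)).2
      _ = M ^ 2 := by rw [← sum_mul, hp1, one_mul]
  refine abs_le_of_sq_le_sq ((sq_weightedCov_le hp hp1 s d).trans ?_) hM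
  calc (∑ z ∈ T, p z * s z ^ 2) * ∑ z ∈ T, p z * d z ^ 2 ≤ 1 * M ^ 2 := by
        gcongr
        · exact sum_nonneg fun z hz => mul_nonneg (hp z hz) (sq_nonneg _)
    _ = M ^ 2 := one_mul _

end WeightedCov

noncomputable def softmax {α : Type*} (T : Finset α) (f : α → ℝ) (z : α) : ℝ :=
  Real.exp (f z) / ∑ w ∈ T, Real.exp (f w)

section Softmax

variable {α : Type*} {T : Finset α}

theorem softmax_nonneg (f : α → ℝ) (z : α) : 0 ≤ softmax T f z :=
  div_nonneg (Real.exp_pos _).le (sum_nonneg fun _ _ => (Real.exp_pos _).le)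

theorem sum_softmax (hT : T.Nonempty) (f : α → ℝ) : ∑ z ∈ T, softmax T f z = 1 := by
  simp only [softmax]
  rw [← sum_div, div_self (sum_pos (fun _ _ => Real.exp_pos _) hT).ne']

theorem hasDerivAt_sum_softmax_mul_line (hT : T.Nonempty) (s f g : α → ℝ) (t : ℝ) :
    HasDerivAt (fun t => ∑ z ∈ T, softmax T (fun z => g z + t * (f z - g z)) z * s z)
      (weightedCov T (softmax T fun z => g z + t * (f z - g z)) s fun z => f z - g z) t := by
  set E : α → ℝ → ℝ := fun z t => Real.exp (g z + t * (f z - g z))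
  have hE : ∀ z, HasDerivAt (E z) ((f z - g z) * E z t) t := fun z =>
    (((hasDerivAt_id t).mul_const (f z - g z)).const_add (g z)).exp.congr_deriv
      (by simp [E, mul_comm])
  have hS : ∑ z ∈ T, E z t ≠ 0 := (sum_pos (fun _ _ => Real.exp_pos _) hT).ne'
  have hquot := (HasDerivAt.fun_sum fun z (_ : z ∈ T) => (hE z).mul_const (s z)).fun_div
    (HasDerivAt.fun_sum fun z (_ : z ∈ T) => hE z) hS
  have hfun : (fun t => ∑ z ∈ T, softmax T (fun z => g z + t * (f z - g z)) z * s z) =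
      fun t => (∑ z ∈ T, E z t * s z) / ∑ z ∈ T, E z t := by
    funext t
    simp only [softmax, sum_div, div_mul_eq_mul_div, E]
  rw [hfun]
  refine hquot.congr_deriv ?_
  simp only [weightedCov, softmax, div_mul_eq_mul_div, ← sum_div]
  field_simp
  ring

theorem abs_sum_softmax_sub_mul_le (hT : T.Nonempty) {s f g : α → ℝ} {M : ℝ}
    (hs : ∀ z ∈ T, |s z| ≤ 1) (hfg : ∀ z ∈ T, |f z - g z| ≤ M) :
    |∑ z ∈ T, (softmax T f z - softmax T g z) * s z| ≤ M := by
  have hM : 0 ≤ M := (abs_nonneg _).trans (hfg _ hT.choose_spec)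
  have hmvt := norm_image_sub_le_of_norm_deriv_le_segment_01'
    (fun t _ => (hasDerivAt_sum_softmax_mul_line hT s f g t).hasDerivWithinAt) fun t _ =>
      abs_weightedCov_le (fun z _ => softmax_nonneg _ z) (sum_softmax hT _) hs hfg hM
  simpa [sub_mul, sum_sub_distrib] using hmvt

theorem sum_abs_softmax_sub_le (hT : T.Nonempty) {f g : α → ℝ} {M : ℝ}
    (hfg : ∀ z ∈ T, |f z - g z| ≤ M) :
    ∑ z ∈ T, |softmax T f z - softmax T g z| ≤ M := by
  have hsign : ∀ z ∈ T, |(SignType.sign (softmax T f z - softmax T g z) : ℝ)| ≤ 1 := by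
    intro z _
    rcases SignType.sign (softmax T f z - softmax T g z) with _ | _ | _ <;> simp
  simpa [self_mul_sign] using (le_abs_self _).trans (abs_sum_softmax_sub_mul_le hT hsign hfg)

end Softmax

section Coupling

variable {α : Type*} {T : Finset α} {dst : α → α → ℝ} {ν ν' : α → ℝ}

theorem W1_le_of_coupling (hdst : ∀ u ∈ T, ∀ v ∈ T, 0 ≤ dst u v) {M : α → α → ℝ}
    (hM : ∀ x y, 0 ≤ M x y) (hrow : ∀ x ∈ T, ∑ y ∈ T, M x y = ν x)
    (hcol : ∀ y ∈ T, ∑ x ∈ T, M x y = ν' y) :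
    W1 T dst ν ν' ≤ ∑ x ∈ T, ∑ y ∈ T, M x y * dst x y := by
  refine csInf_le ⟨0, ?_⟩ ⟨M, hM, hrow, hcol, rfl⟩
  rintro _ ⟨N, hN, -, -, rfl⟩
  exact sum_nonneg fun x hx => sum_nonneg fun y hy => mul_nonneg (hN x y) (hdst x hx y hy)

def excess (ν ν' : α → ℝ) (z : α) : ℝ := ν z - min (ν z) (ν' z)

theorem excess_nonneg (z : α) : 0 ≤ excess ν ν' z :=
  sub_nonneg.2 (min_le_left _ _)

theorem excess_add_excess (z : α) : excess ν ν' z + excess ν' ν z = |ν z - ν' z| := by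
  rw [excess, excess, min_comm (ν' z), abs_sub_comm, ← max_sub_min_eq_abs]
  linarith [min_add_max (ν z) (ν' z)]

theorem sum_excess_comm (hsum : ∑ z ∈ T, ν z = ∑ z ∈ T, ν' z) :
    ∑ z ∈ T, excess ν' ν z = ∑ z ∈ T, excess ν ν' z := by
  simp only [excess, min_comm (ν' _), sum_sub_distrib, hsum]

theorem sum_abs_sub_eq_two_mul_sum_excess (hsum : ∑ z ∈ T, ν z = ∑ z ∈ T, ν' z) :
    ∑ z ∈ T, |ν z - ν' z| = 2 * ∑ z ∈ T, excess ν ν' z := by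
  rw [← sum_congr rfl fun z _ => excess_add_excess z, sum_add_distrib, sum_excess_comm hsum]
  ring

theorem mul_sum_excess_div_sum_excess {x : α} (hx : x ∈ T) :
    excess ν ν' x * (∑ z ∈ T, excess ν ν' z) / ∑ z ∈ T, excess ν ν' z = excess ν ν' x := by
  rcases eq_or_ne (∑ z ∈ T, excess ν ν' z) 0 with h | h
  · rw [(sum_eq_zero_iff_of_nonneg fun z _ => excess_nonneg z).1 h x hx, zero_mul, zero_div]
  · exact mul_div_cancel_right₀ _ h

section MaximalCoupling

variable [DecidableEq α]

variable (T ν ν') in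
noncomputable def maximalCoupling (x y : α) : ℝ :=
  (if x = y then min (ν x) (ν' x) else 0) +
    excess ν ν' x * excess ν' ν y / ∑ z ∈ T, excess ν ν' z

theorem maximalCoupling_nonneg (hν : ∀ z, 0 ≤ ν z) (hν' : ∀ z, 0 ≤ ν' z) (x y : α) :
    0 ≤ maximalCoupling T ν ν' x y := by
  refine add_nonneg ?_ (div_nonneg (mul_nonneg (excess_nonneg x) (excess_nonneg y))
    (sum_nonneg fun z _ => excess_nonneg z))
  split_ifs
  exacts [le_min (hν x) (hν' x), le_rfl]

theorem sum_maximalCoupling_right (hsum : ∑ z ∈ T, ν z = ∑ z ∈ T, ν' z) {x : α} (hx : x ∈ T) :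
    ∑ y ∈ T, maximalCoupling T ν ν' x y = ν x := by
  simp only [maximalCoupling, sum_add_distrib, sum_ite_eq, if_pos hx, mul_div_assoc, ← mul_sum,
    ← sum_div, sum_excess_comm hsum]
  rw [← mul_div_assoc, mul_sum_excess_div_sum_excess hx, excess]
  ring

theorem sum_maximalCoupling_left (hsum : ∑ z ∈ T, ν z = ∑ z ∈ T, ν' z) {y : α} (hy : y ∈ T) :
    ∑ x ∈ T, maximalCoupling T ν ν' x y = ν' y := by
  simp only [maximalCoupling, sum_add_distrib, sum_ite_eq', if_pos hy, ← sum_div, ← sum_mul]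
  rw [mul_comm, ← sum_excess_comm hsum, mul_sum_excess_div_sum_excess hy, excess, min_comm]
  ring

theorem sum_maximalCoupling_mul_le (hsum : ∑ z ∈ T, ν z = ∑ z ∈ T, ν' z)
    (hdiag : ∀ u ∈ T, dst u u = 0) {D : ℝ} (hD : ∀ u ∈ T, ∀ v ∈ T, dst u v ≤ D) :
    ∑ x ∈ T, ∑ y ∈ T, maximalCoupling T ν ν' x y * dst x y ≤
      D / 2 * ∑ z ∈ T, |ν z - ν' z| := by
  set δ := ∑ z ∈ T, excess ν ν' z
  have hterm : ∀ x ∈ T, ∀ y ∈ T,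
      maximalCoupling T ν ν' x y * dst x y ≤ excess ν ν' x * excess ν' ν y / δ * D := by
    intro x hx y hy
    have hw : 0 ≤ excess ν ν' x * excess ν' ν y / δ :=
      div_nonneg (mul_nonneg (excess_nonneg x) (excess_nonneg y))
        (sum_nonneg fun z _ => excess_nonneg z)
    by_cases hxy : x = y
    · subst hxy
      rw [hdiag x hx, mul_zero]
      exact mul_nonneg hw ((hdiag x hx).symm.le.trans (hD x hx x hx))
    · rw [maximalCoupling, if_neg hxy, zero_add]
      exact mul_le_mul_of_nonneg_left (hD x hx y hy) hw
  calc ∑ x ∈ T, ∑ y ∈ T, maximalCoupling T ν ν' x y * dst x y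
      ≤ ∑ x ∈ T, ∑ y ∈ T, excess ν ν' x * excess ν' ν y / δ * D :=
        sum_le_sum fun x hx => sum_le_sum fun y hy => hterm x hx y hy
    _ = δ * δ / δ * D := by
        simp only [← sum_div, ← sum_mul, ← mul_sum, sum_excess_comm hsum]
        rfl
    _ = D / 2 * ∑ z ∈ T, |ν z - ν' z| := by
        rw [mul_self_div_self, sum_abs_sub_eq_two_mul_sum_excess hsum]
        ring

end MaximalCoupling

theorem W1_le_half_mul_sum_abs_sub (hdst : ∀ u ∈ T, ∀ v ∈ T, 0 ≤ dst u v)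
    (hdiag : ∀ u ∈ T, dst u u = 0)
    {D : ℝ} (hD : ∀ u ∈ T, ∀ v ∈ T, dst u v ≤ D) (hν : ∀ z, 0 ≤ ν z) (hν' : ∀ z, 0 ≤ ν' z)
    (hsum : ∑ z ∈ T, ν z = ∑ z ∈ T, ν' z) :
    W1 T dst ν ν' ≤ D / 2 * ∑ z ∈ T, |ν z - ν' z| := by
  classical
  calc W1 T dst ν ν' ≤ ∑ x ∈ T, ∑ y ∈ T, maximalCoupling T ν ν' x y * dst x y :=
        W1_le_of_coupling hdst (maximalCoupling_nonneg hν hν')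
          (fun x hx => sum_maximalCoupling_right hsum hx)
          fun y hy => sum_maximalCoupling_left hsum hy
    _ ≤ D / 2 * ∑ z ∈ T, |ν z - ν' z| := sum_maximalCoupling_mul_le hsum hdiag hD

end Coupling

theorem sup'_abs_le_sqrt_sum_sq {α : Type*} {T : Finset α} (hT : T.Nonempty) (f : α → ℝ) :
    T.sup' hT (fun z => |f z|) ≤ √(∑ z ∈ T, f z ^ 2) := by
  obtain ⟨z, hz, hmax⟩ := exists_mem_eq_sup' hT fun z => |f z|
  rw [hmax, ← Real.sqrt_sq_eq_abs]
  exact Real.sqrt_le_sqrt (single_le_sum (fun z _ => sq_nonneg (f z)) hz)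

theorem sqrt_sum_sq_le_sqrt_card_mul_sup' {α : Type*} {T : Finset α} (hT : T.Nonempty)
    (f : α → ℝ) : √(∑ z ∈ T, f z ^ 2) ≤ √T.card * T.sup' hT (fun z => |f z|) := by
  have hM : 0 ≤ T.sup' hT (fun z => |f z|) :=
    (abs_nonneg _).trans (le_sup' (fun z => |f z|) hT.choose_spec)
  rw [← Real.sqrt_sq hM, ← Real.sqrt_mul (Nat.cast_nonneg _)]
  refine Real.sqrt_le_sqrt ?_
  calc ∑ z ∈ T, f z ^ 2 ≤ ∑ _z ∈ T, T.sup' hT (fun z => |f z|) ^ 2 :=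
        sum_le_sum fun z hz => sq_le_sq' (abs_le.1 (le_sup' (fun z => |f z|) hz)).1
          (abs_le.1 (le_sup' (fun z => |f z|) hz)).2
    _ = T.card * T.sup' hT (fun z => |f z|) ^ 2 := by rw [sum_const, nsmul_eq_mul]

theorem norm_sub_le_sSup {E : Type*} [SeminormedAddCommGroup E] (X : Finset E) {u v : E}
    (hu : u ∈ X) (hv : v ∈ X) : ‖u - v‖ ≤ sSup {r : ℝ | ∃ u ∈ X, ∃ v ∈ X, r = ‖u - v‖} := by
  refine le_csSup (((X ×ˢ X).finite_toSet.image fun p => ‖p.1 - p.2‖).subset ?_).bddAbove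
    ⟨u, hu, v, hv, rfl⟩
  rintro _ ⟨u, hu, v, hv, rfl⟩
  exact ⟨(u, v), mk_mem_product hu hv, rfl⟩

theorem smx_eq_softmax {k : ℕ} (X : Finset (EuclideanSpace ℝ (Fin k))) (c : ℝ)
    (x : EuclideanSpace ℝ (Fin k) → ℝ) : smx X c x = softmax X fun z => c * x z :=
  rfl

/-- `W₁(softmax_c(x), softmax_c(y)) ≤ (diam(X) √n c / 2) ‖x - y‖₂ ≤ (diam(X) n c / 2) ‖x - y‖_∞`
for vectors `x, y` indexed by the finite set `X ⊆ ℝᵏ` with `n = |X|`. -/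
theorem stmt_14 {k : ℕ} (X : Finset (EuclideanSpace ℝ (Fin k))) (hX : X.Nonempty)
    (c : ℝ) (hc : 0 < c) (x y : EuclideanSpace ℝ (Fin k) → ℝ) :
    W1 X (fun u v => ‖u - v‖) (smx X c x) (smx X c y) ≤
      sSup {r : ℝ | ∃ u ∈ X, ∃ v ∈ X, r = ‖u - v‖} * Real.sqrt X.card * c / 2 *
        Real.sqrt (∑ z ∈ X, (x z - y z) ^ 2) ∧
    sSup {r : ℝ | ∃ u ∈ X, ∃ v ∈ X, r = ‖u - v‖} * Real.sqrt X.card * c / 2 *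
        Real.sqrt (∑ z ∈ X, (x z - y z) ^ 2) ≤
      sSup {r : ℝ | ∃ u ∈ X, ∃ v ∈ X, r = ‖u - v‖} * X.card * c / 2 *
        X.sup' hX (fun z => |x z - y z|) := by
  set D := sSup {r : ℝ | ∃ u ∈ X, ∃ v ∈ X, r = ‖u - v‖}
  set M := X.sup' hX fun z => |x z - y z|
  set L := √(∑ z ∈ X, (x z - y z) ^ 2)
  have hDle : ∀ u ∈ X, ∀ v ∈ X, ‖u - v‖ ≤ D := fun u hu v hv => norm_sub_le_sSup X hu hv
  have hD : 0 ≤ D := (norm_nonneg _).trans (hDle _ hX.choose_spec _ hX.choose_spec)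
  have hcM : ∀ z ∈ X, |c * x z - c * y z| ≤ c * M := fun z hz => by
    rw [← mul_sub, abs_mul, abs_of_pos hc]
    exact mul_le_mul_of_nonneg_left (le_sup' (fun z => |x z - y z|) hz) hc.le
  have hW : W1 X (fun u v => ‖u - v‖) (smx X c x) (smx X c y) ≤ D / 2 * (c * M) := by
    rw [smx_eq_softmax, smx_eq_softmax]
    refine (W1_le_half_mul_sum_abs_sub (fun u _ v _ => norm_nonneg _) (fun u _ => by simp) hDle
      (softmax_nonneg _) (softmax_nonneg _) (by rw [sum_softmax hX, sum_softmax hX])).trans ?_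
    exact mul_le_mul_of_nonneg_left (sum_abs_softmax_sub_le hX hcM) (by positivity)
  have hML : M ≤ L := sup'_abs_le_sqrt_sum_sq hX _
  have hLM : L ≤ √X.card * M := sqrt_sum_sq_le_sqrt_card_mul_sup' hX _
  have hn : 1 ≤ √X.card := Real.one_le_sqrt.2 (by exact_mod_cast hX.card_pos)
  have hM : 0 ≤ M := (abs_nonneg _).trans (le_sup' (fun z => |x z - y z|) hX.choose_spec)
  constructor
  · calc W1 X (fun u v => ‖u - v‖) (smx X c x) (smx X c y) ≤ D * c / 2 * (1 * M) := by
          linarith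
      _ ≤ D * c / 2 * (√X.card * L) := by gcongr
      _ = D * √X.card * c / 2 * L := by ring
  · calc D * √X.card * c / 2 * L ≤ D * √X.card * c / 2 * (√X.card * M) := by gcongr
      _ = D * (√X.card * √X.card) * c / 2 * M := by ring
      _ = D * X.card * c / 2 * M := by rw [Real.mul_self_sqrt (Nat.cast_nonneg _)]
end
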